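/- Let 0 < α ≤ α_* = 1/max_i(π_i σ_i²) and z_i = 1 − α π_i σ_i² for every i. Then z ∈ [0,1)^n, the common asymptotic estimation cost v(z) = (∑_j π_j² σ_j²/(1 − z_j)²)/γ(z)² equals (∑_j σ_j^{−2})^{−1}, and (∑_j σ_j^{−2})^{−1} < σ_i² for every agent i. -/

import Mathlib

open Finset

/-- Let `0 < α ≤ α_* = 1/max_i(π_i σ_i²)` and `z_i = 1 - α π_i σ_i²`
for every `i`. Then `z ∈ [0,1)ⁿ`, the common asymptotic estimation cost
`v(z) = (∑_j π_j² σ_j²/(1-z_j)²)/γ(z)²` equals `(∑_j σ_j^{-2})⁻¹`, and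
`(∑_j σ_j^{-2})⁻¹ < σ_i²` for every agent `i`. -/
theorem stmt_12 (n : ℕ) (hn : 2 ≤ n)
    (π σ2 : Fin n → ℝ) (hπpos : ∀ i, 0 < π i) (hπsum : ∑ i, π i = 1)
    (hσ : ∀ i, 0 < σ2 i)
    (α : ℝ) (hα : 0 < α)
    (hαs : α ≤ 1 / (Finset.univ.sup' ⟨⟨0, by omega⟩, Finset.mem_univ _⟩
                      fun i => π i * σ2 i))
    (z : Fin n → ℝ) (hzdef : ∀ i, z i = 1 - α * (π i * σ2 i)) :
    (∀ i, z i ∈ Set.Ico (0 : ℝ) 1) ∧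
    ((∑ j, (π j) ^ 2 * σ2 j / (1 - z j) ^ 2) / (∑ j, π j / (1 - z j)) ^ 2
      = (∑ j, (σ2 j)⁻¹)⁻¹) ∧
    (∀ i, (∑ j, (σ2 j)⁻¹)⁻¹ < σ2 i) := by
  have hne : (Finset.univ : Finset (Fin n)).Nonempty :=
    ⟨⟨0, by omega⟩, Finset.mem_univ _⟩
  set M := Finset.univ.sup' hne (fun i => π i * σ2 i) with hM
  have hMpos : 0 < M := by
    have := Finset.le_sup' (fun i => π i * σ2 i) (Finset.mem_univ (⟨0, by omega⟩ : Fin n))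
    exact lt_of_lt_of_le (mul_pos (hπpos _) (hσ _)) this
  have hαM : ∀ i, α * (π i * σ2 i) ≤ 1 := by
    intro i
    have h1 : π i * σ2 i ≤ M := Finset.le_sup' (fun i => π i * σ2 i) (Finset.mem_univ i)
    have h2 : α * M ≤ 1 := by
      have := mul_le_mul_of_nonneg_right hαs hMpos.le
      rwa [one_div, inv_mul_cancel₀ hMpos.ne'] at this
    calc α * (π i * σ2 i) ≤ α * M := by
          exact mul_le_mul_of_nonneg_left h1 hα.le
      _ ≤ 1 := h2
  have hpos : ∀ i, 0 < α * (π i * σ2 i) := fun i =>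
    mul_pos hα (mul_pos (hπpos i) (hσ i))
  have h1z : ∀ i, 1 - z i = α * (π i * σ2 i) := by
    intro i; rw [hzdef i]; ring
  have hSpos : 0 < ∑ j, (σ2 j)⁻¹ :=
    Finset.sum_pos (fun j _ => inv_pos.mpr (hσ j)) hne
  refine ⟨fun i => ⟨by rw [hzdef i]; linarith [hαM i], by rw [hzdef i]; linarith [hpos i]⟩,
    ?_, ?_⟩
  · have e1 : ∑ j, (π j) ^ 2 * σ2 j / (1 - z j) ^ 2
        = α⁻¹ ^ 2 * ∑ j, (σ2 j)⁻¹ := by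
      rw [Finset.mul_sum]
      refine Finset.sum_congr rfl fun j _ => ?_
      rw [h1z j]
      have hπj := (hπpos j).ne'
      have hσj := (hσ j).ne'
      field_simp
    have e2 : ∑ j, π j / (1 - z j) = α⁻¹ * ∑ j, (σ2 j)⁻¹ := by
      rw [Finset.mul_sum]
      refine Finset.sum_congr rfl fun j _ => ?_
      rw [h1z j]
      have hπj := (hπpos j).ne'
      have hσj := (hσ j).ne'
      field_simp
    rw [e1, e2, mul_pow,
      mul_div_mul_left _ _ (pow_ne_zero 2 (inv_ne_zero hα.ne')),
      sq, ← div_div, div_self hSpos.ne', one_div]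
  · intro i
    have hlt : (σ2 i)⁻¹ < ∑ j, (σ2 j)⁻¹ := by
      have : Nontrivial (Fin n) := Fin.nontrivial_iff_two_le.mpr hn
      obtain ⟨k, hk⟩ := exists_ne i
      have := Finset.sum_lt_sum_of_subset (s := {i}) (t := Finset.univ)
        (f := fun j => (σ2 j)⁻¹) (by simp) (Finset.mem_univ k) (by simp [hk])
        (inv_pos.mpr (hσ k)) (fun j _ _ => (inv_pos.mpr (hσ j)).le)
      simpa using this
    calc (∑ j, (σ2 j)⁻¹)⁻¹ < ((σ2 i)⁻¹)⁻¹ := by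
          exact inv_strictAnti₀ (inv_pos.mpr (hσ i)) hlt
      _ = σ2 i := inv_inv _
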